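/- There exists a parameter c ∈ (3.85, 4) such that, writing g_c = f_c³ (the third iterate of the quadratic map f_c), one has g_c(1/2) ≠ g_c²(1/2) and g_c²(1/2) = g_c³(1/2). -/

import Mathlib

open MeasureTheory Set Filter Topology ENNReal NNReal

/-- The quadratic (logistic) map `f_a(x) = a·x·(1−x)`. -/
noncomputable def fa (a x : ℝ) : ℝ := a * x * (1 - x)

/-- The Birkhoff average of Dirac measures along the orbit of `x`:
`ν_a^n(x) = (1/n)·Σ_{k=0}^{n−1} δ_{f_a^k(x)}`. -/
noncomputable def birkhoff (a : ℝ) (n : ℕ) (x : ℝ) : Measure ℝ :=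
  (n : ℝ≥0∞)⁻¹ • ∑ k ∈ Finset.range n, Measure.dirac ((fa a)^[k] x)

/-- Weak convergence of a sequence of (finite Borel) measures on `ℝ`. -/
def WeakLim (μs : ℕ → Measure ℝ) (μ : Measure ℝ) : Prop :=
  ∀ g : BoundedContinuousFunction ℝ ℝ,
    Tendsto (fun n => ∫ x, g x ∂ (μs n)) atTop (𝓝 (∫ x, g x ∂ μ))

/-- The basin of a measure `μ` for the map `f_a`. -/
def basin (a : ℝ) (μ : Measure ℝ) : Set ℝ :=
  {x | x ∈ Icc (0:ℝ) 1 ∧ WeakLim (fun n => birkhoff a n x) μ}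

/-- `μ` is a physical measure of `f_a`: a Borel probability measure on `[0,1]` whose
basin has positive Lebesgue measure. -/
def IsPhysicalMeasure (a : ℝ) (μ : Measure ℝ) : Prop :=
  IsProbabilityMeasure μ ∧ μ (Icc (0:ℝ) 1) = 1 ∧ 0 < volume (basin a μ)

/-- A computable real number. -/
def ComputableReal (x : ℝ) : Prop :=
  ∃ q : ℕ → ℚ, Computable q ∧ ∀ n : ℕ, |(q n : ℝ) - x| < 2 ^ (-(n:ℤ))

/-- The continuous piecewise linear function determined by a list of
(rational) breakpoints and values. -/
noncomputable def pwlFun : List (ℚ × ℚ) → ℝ → ℝ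
  | [], _ => 0
  | [(_, v)], _ => (v : ℝ)
  | (q₁, v₁) :: (q₂, v₂) :: L, x =>
    if x ≤ (q₁ : ℝ) then (v₁ : ℝ)
    else if x ≤ (q₂ : ℝ) then
      (v₁ : ℝ) + (x - (q₁ : ℝ)) * ((v₂ : ℝ) - (v₁ : ℝ)) / ((q₂ : ℝ) - (q₁ : ℝ))
    else pwlFun ((q₂, v₂) :: L) x

/-- A computable Borel probability measure on `[0,1]`: the integrals of the (canonically
encoded) continuous piecewise linear functions with rational breakpoints and values can be
uniformly approximated by an algorithm. -/
def ComputableMeasure (μ : Measure ℝ) : Prop :=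
  ∃ M : List (ℚ × ℚ) → ℕ → ℚ, Computable₂ M ∧
    ∀ L : List (ℚ × ℚ), L.Chain' (fun p q => p.1 < q.1) →
      ∀ k : ℕ, |(M L k : ℝ) - ∫ x, pwlFun L x ∂μ| < 2 ^ (-(k:ℤ))

/-- The third iterate `g_a = f_a³`. -/
noncomputable def ga (a : ℝ) : ℝ → ℝ := (fa a)^[3]

/-!
Choose `c` with `f_c⁵(1/2) = 1/c` (intermediate value theorem on `[3.85, 3.9]`). Since
`f_c(1/c) = 1 - 1/c` is the nonzero fixed point of `f_c`, the critical orbit lands on it at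
time `6`, so `g_c²(1/2) = g_c³(1/2)`. If also `g_c(1/2) = f_c³(1/2)` were that fixed point,
then so would be `f_c⁵(1/2) = 1/c`, forcing `c = 2`.
-/

theorem fa_inv_self {a : ℝ} (ha : a ≠ 0) : fa a a⁻¹ = 1 - a⁻¹ := by
  simp only [fa, mul_inv_cancel₀ ha, one_mul]

theorem isFixedPt_fa_one_sub_inv {a : ℝ} (ha : a ≠ 0) :
    Function.IsFixedPt (fa a) (1 - a⁻¹) := by
  simp only [Function.IsFixedPt, fa]
  field_simp
  ring

theorem continuous_iterate_fa_apply (n : ℕ) (x : ℝ) : Continuous fun a => (fa a)^[n] x := by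
  induction n with
  | zero => exact continuous_const
  | succ n ih =>
    simp only [Function.iterate_succ_apply', fa]
    fun_prop

theorem exists_iterate_fa_five_half_eq_inv :
    ∃ c ∈ Ioo (3.85 : ℝ) 3.9, (fa c)^[5] (1/2) = c⁻¹ := by
  have hcont : ContinuousOn (fun a : ℝ => a * (fa a)^[5] (1/2)) (Icc 3.85 3.9) :=
    (continuous_id.mul (continuous_iterate_fa_apply 5 _)).continuousOn
  have hsign : (1 : ℝ) ∈ Ioo (3.85 * (fa 3.85)^[5] (1/2)) (3.9 * (fa 3.9)^[5] (1/2)) := by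
    simp only [Function.iterate_succ_apply', Function.iterate_zero_apply, fa]
    norm_num
  obtain ⟨c, hc, hc1⟩ := intermediate_value_Ioo (by norm_num) hcont hsign
  exact ⟨c, hc, eq_inv_of_mul_eq_one_right hc1⟩

section

variable {a x : ℝ}

theorem ga_ga_eq_of_iterate_five_eq_inv (ha : a ≠ 0) (h5 : (fa a)^[5] x = a⁻¹) :
    ga a (ga a x) = 1 - a⁻¹ := by
  rw [ga, ← Function.iterate_add_apply, Function.iterate_succ_apply', h5, fa_inv_self ha]

theorem ga_ne_of_iterate_five_eq_inv (ha : a ≠ 0) (ha2 : a ≠ 2) (h5 : (fa a)^[5] x = a⁻¹) :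
    ga a x ≠ 1 - a⁻¹ := by
  intro h3
  have h5' : (fa a)^[5] x = 1 - a⁻¹ := by
    change (fa a)^[2] (ga a x) = _
    rw [h3]
    exact (isFixedPt_fa_one_sub_inv ha).iterate 2
  apply ha2
  field_simp at h5 h5'
  linarith

end

/-- There exists `c ∈ (3.85, 4)` such that, writing `g_c = f_c³`,
one has `g_c(1/2) ≠ g_c²(1/2)` and `g_c²(1/2) = g_c³(1/2)`. -/
theorem stmt3 :
    ∃ c : ℝ, c ∈ Ioo (3.85 : ℝ) 4 ∧
      ga c (1/2) ≠ ga c (ga c (1/2)) ∧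
      ga c (ga c (1/2)) = ga c (ga c (ga c (1/2))) := by
  obtain ⟨c, ⟨hc_lo, hc_hi⟩, h5⟩ := exists_iterate_fa_five_half_eq_inv
  have hc0 : c ≠ 0 := by linarith
  have hga2 := ga_ga_eq_of_iterate_five_eq_inv hc0 h5
  refine ⟨c, ⟨hc_lo, by linarith⟩, ?_, ?_⟩
  · rw [hga2]
    exact ga_ne_of_iterate_five_eq_inv hc0 (by linarith) h5
  · rw [hga2]
    exact ((isFixedPt_fa_one_sub_inv hc0).iterate 3).symm
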